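/- Fix a real number y and a natural number n. For every real polynomial q(x) of degree at most n, q(x) = Σ_{k=0}^{n} b_k · ₍B₎E_k(x;y) for all x, where b_k = (1/k!) · ⟨ ((e^t+1)/2) · e^{−y(e^t−1)} · t^k | q(x) ⟩ and ⟨·|·⟩ is the umbral pairing. -/

import Mathlib

/-! Let `g = ((e^t + 1)/2) e^{-y(e^t-1)}` and let `F` be the generating function of the
`₍B₎E_k(x;y)`. Since `e^{y(e^t-1)}` is `e^{yT}` with `T = e^t - 1` substituted, the Bell factors
cancel and `g F = e^{xt}`, whose pairing with `q` is `q(x)`. The pairing with `q` only sees the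
coefficients of degree `≤ deg q ≤ n`, so `F` may be replaced by its truncation
`∑_{k ≤ n} ₍B₎E_k t^k / k!`, and linearity of the pairing gives the expansion. -/

open PowerSeries Finset

/-- The series `e^{x t}`. -/
noncomputable def expXT (x : ℝ) : PowerSeries ℝ :=
  PowerSeries.rescale x (PowerSeries.exp ℝ)

/-- The series `e^{y (e^t - 1)} = ∑_{k ≥ 0} y^k (e^t - 1)^k / k!`
(the inner sum is finite in each coefficient since `(e^t - 1)^k` has order `≥ k`). -/
noncomputable def bellSeries (y : ℝ) : PowerSeries ℝ :=
  PowerSeries.mk fun n =>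
    ∑ k ∈ Finset.range (n + 1),
      y ^ k * ((k.factorial : ℝ))⁻¹ * PowerSeries.coeff (R := ℝ) n ((PowerSeries.exp ℝ - 1) ^ k)

/-- The series `(2 / (e^t + 1))^α`. -/
noncomputable def eulerSeries (α : ℕ) : PowerSeries ℝ :=
  (2 * (PowerSeries.exp ℝ + 1)⁻¹) ^ α

/-- The Bell-based Euler polynomial `₍B₎E_n^(α)(x; y)`:
`n!` times the coefficient of `t^n` in `(2/(e^t+1))^α e^{xt + y(e^t-1)}`. -/
noncomputable def bellEuler (α : ℕ) (x y : ℝ) (n : ℕ) : ℝ :=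
  n.factorial * PowerSeries.coeff (R := ℝ) n (eulerSeries α * expXT x * bellSeries y)

/-- The umbral pairing `⟨g(t) | q(x)⟩ = ∑_m q_m · m! · (coeff of t^m in g)`. -/
noncomputable def umbral (g : PowerSeries ℝ) (q : Polynomial ℝ) : ℝ :=
  ∑ m ∈ Finset.range (q.natDegree + 1),
    q.coeff m * m.factorial * PowerSeries.coeff (R := ℝ) m g

theorem coeff_pow_eq_zero_of_constantCoeff_eq_zero {R : Type*} [CommSemiring R]
    {φ : PowerSeries R} (hφ : constantCoeff φ = 0) {k m : ℕ} (h : m < k) : coeff m (φ ^ k) = 0 :=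
  coeff_of_lt_order m ((Nat.cast_lt.2 h).trans_le (le_order_pow_of_constantCoeff_eq_zero k hφ))

theorem constantCoeff_exp_sub_one {A : Type*} [CommRing A] [Algebra ℚ A] :
    constantCoeff (exp A - 1) = 0 := by simp

theorem bellSeries_eq_subst (y : ℝ) : bellSeries y = (rescale y (exp ℝ)).subst (exp ℝ - 1) := by
  ext n
  rw [coeff_subst' (HasSubst.of_constantCoeff_zero' constantCoeff_exp_sub_one), bellSeries,
    coeff_mk, finsum_eq_sum_of_support_subset _ (s := range (n + 1)) ?_]
  · refine sum_congr rfl fun k _ => ?_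
    simp [coeff_rescale, coeff_exp, div_eq_mul_inv]
  · intro k hk
    rw [coe_range, Set.mem_Iio]
    by_contra! hnk
    apply hk
    dsimp only
    rw [coeff_pow_eq_zero_of_constantCoeff_eq_zero constantCoeff_exp_sub_one (by omega), smul_zero]

theorem bellSeries_mul_bellSeries (y y' : ℝ) :
    bellSeries y * bellSeries y' = bellSeries (y + y') := by
  rw [bellSeries_eq_subst, bellSeries_eq_subst, bellSeries_eq_subst,
    ← subst_mul (HasSubst.of_constantCoeff_zero' constantCoeff_exp_sub_one), exp_mul_exp_eq_exp_add]

theorem bellSeries_zero : bellSeries 0 = 1 := by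
  rw [bellSeries_eq_subst, rescale_zero_apply, constantCoeff_exp, map_one, ← map_one (C (R := ℝ)),
    subst_C]
  rfl

theorem bellSeries_neg_mul_self (y : ℝ) : bellSeries (-y) * bellSeries y = 1 := by
  rw [bellSeries_mul_bellSeries, neg_add_cancel, bellSeries_zero]

theorem umbral_congr {g h : PowerSeries ℝ} {q : Polynomial ℝ}
    (hgh : ∀ m ≤ q.natDegree, coeff m g = coeff m h) : umbral g q = umbral h q :=
  sum_congr rfl fun m hm => by rw [hgh m (Nat.lt_succ_iff.1 (mem_range.1 hm))]

theorem umbral_sum_smul {ι : Type*} (s : Finset ι) (c : ι → ℝ) (g : ι → PowerSeries ℝ)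
    (q : Polynomial ℝ) : umbral (∑ i ∈ s, c i • g i) q = ∑ i ∈ s, c i * umbral (g i) q := by
  simp only [umbral, map_sum, map_smul, smul_eq_mul, mul_sum]
  rw [sum_comm]
  exact sum_congr rfl fun _ _ => sum_congr rfl fun _ _ => by ring

theorem umbral_expXT (x : ℝ) (q : Polynomial ℝ) : umbral (expXT x) q = q.eval x := by
  rw [umbral, Polynomial.eval_eq_sum_range]
  refine sum_congr rfl fun m _ => ?_
  simp only [expXT, coeff_rescale, coeff_exp, one_div, eq_ratCast, Rat.cast_inv, Rat.cast_natCast]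
  field_simp

theorem coe_trunc_eq_sum_smul_X_pow {R : Type*} [CommSemiring R] (n : ℕ) (f : PowerSeries R) :
    (trunc n f : PowerSeries R) = ∑ k ∈ range n, coeff k f • X ^ k := by
  rw [← Polynomial.eval₂_C_X_eq_coe, eval₂_trunc_eq_sum_range]
  simp only [smul_eq_C_mul]

theorem coeff_mul_coe_trunc_of_lt {R : Type*} [CommSemiring R] {d n : ℕ} (f g : PowerSeries R)
    (h : d < n) : coeff d (f * (trunc n g : PowerSeries R)) = coeff d (f * g) := by
  rw [coeff_mul_eq_coeff_trunc_mul_trunc _ _ h, trunc_trunc,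
    ← coeff_mul_eq_coeff_trunc_mul_trunc _ _ h]

theorem eval_eq_sum_coeff_mul_umbral {g F : PowerSeries ℝ} {x : ℝ} (hgF : g * F = expXT x)
    {n : ℕ} {q : Polynomial ℝ} (hq : q.natDegree ≤ n) :
    q.eval x = ∑ k ∈ range (n + 1), coeff k F * umbral (g * X ^ k) q := by
  calc q.eval x = umbral (g * F) q := by rw [hgF, umbral_expXT]
    _ = umbral (g * (trunc (n + 1) F : PowerSeries ℝ)) q :=
        umbral_congr fun m hm => (coeff_mul_coe_trunc_of_lt g F (by omega)).symm
    _ = _ := by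
        simp only [coe_trunc_eq_sum_smul_X_pow, mul_sum, mul_smul_comm, umbral_sum_smul]

theorem smul_exp_add_one_mul_bellSeries_neg_mul_eq_expXT (x y : ℝ) :
    ((2 : ℝ)⁻¹ • (exp ℝ + 1)) * bellSeries (-y) * (eulerSeries 1 * expXT x * bellSeries y) =
      expXT x := by
  have hEuler : (2 : ℝ)⁻¹ • (exp ℝ + 1) * eulerSeries 1 = 1 := by
    rw [eulerSeries, pow_one, smul_mul_assoc, mul_left_comm,
      PowerSeries.mul_inv_cancel _ (by simp), mul_one, smul_eq_C_mul, ← map_ofNat C, ← map_mul]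
    norm_num
  calc _ = ((2 : ℝ)⁻¹ • (exp ℝ + 1) * eulerSeries 1) * (bellSeries (-y) * bellSeries y) *
        expXT x := by ring
    _ = expXT x := by rw [hEuler, bellSeries_neg_mul_self, one_mul, one_mul]

theorem stmt10 (y : ℝ) (n : ℕ) (q : Polynomial ℝ) (hq : q.natDegree ≤ n) (x : ℝ) :
    q.eval x =
      ∑ k ∈ Finset.range (n + 1),
        (((k.factorial : ℝ))⁻¹ *
            umbral (((2 : ℝ)⁻¹ • (PowerSeries.exp ℝ + 1)) * bellSeries (-y) *
              PowerSeries.X ^ k) q) *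
          bellEuler 1 x y k := by
  rw [eval_eq_sum_coeff_mul_umbral (smul_exp_add_one_mul_bellSeries_neg_mul_eq_expXT x y) hq]
  refine sum_congr rfl fun k _ => ?_
  rw [bellEuler]
  field_simp
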